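/- Let S be a 7×7 real matrix (rows and columns 1-indexed) whose zero entries are exactly at positions (1,1), (1,2), (1,3), (2,1), (2,3), (2,4), (3,1), (3,4), (3,5), (3,6), (4,1), (4,2), (4,5), (4,7), (5,3), (5,4), (5,6), (6,2), (6,3), (6,6), (6,7), (7,5), (7,6), (7,7), whose remaining entries are strictly positive, and which has rank 4. Then there is no 7×7 complex matrix M with rank M = 4 such that S_{ij} = |M_{ij}|² for all i, j. -/

import Mathlib

/-!
Each trinomial `a = b + c` below is, up to a monomial factor kept nonzero by the support
pattern, a 5-minor, so it holds for every matrix with this support and rank at most 4. Holding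
both for `M` and for `S = |M|²` (whose monomials are the squared moduli of those of `M`), it gives
`|b + c|² = |b|² + |c|²`, i.e. `re (b * conj c) = 0`. In the gauge
`p = M 0 4 * M 1 5 / (M 0 5 * M 1 4)`, `r = M 0 4 * M 1 6 / (M 0 6 * M 1 4)` the three trinomials
say that `p` sees both `[0, 1]` and `[0, r]` at a right angle, and that `r` lies on the tangent
`re z = 1` to the first Thales circle at `1`. The two Thales circles then meet only in `0` and `1`
(or coincide, if `r = 1`), and each of these cases kills a supported entry of `M`.
-/

open Complex ComplexConjugate Matrix

theorem Matrix.det_submatrix_eq_zero_of_rank_lt {R m n : Type*} [CommRing R] [IsDomain R]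
    [Fintype n] (A : Matrix m n R) {k : ℕ} (hk : A.rank < k) (r : Fin k → m) (c : Fin k → n) :
    (A.submatrix r c).det = 0 := by
  by_contra h
  have := A.rank_submatrix_le r c
  rw [rank_of_det_ne_zero h, Fintype.card_fin] at this
  omega

namespace Complex

theorem re_mul_conj_eq_zero_of_normSq_add {u v : ℂ}
    (h : normSq (u + v) = normSq u + normSq v) : (u * conj v).re = 0 := by
  rw [normSq_add] at h
  linarith

theorem re_mul_conj_eq_zero_of_eq_mul {u v u' v' : ℂ} (κ : ℂ) (hu : u' = κ * u)
    (hv : v' = κ * v) (h : (u * conj v).re = 0) : (u' * conj v').re = 0 := by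
  subst hu hv
  rw [map_mul, mul_mul_mul_comm, mul_conj, re_ofReal_mul, h, mul_zero]

theorem eq_one_or_eq_zero_or_eq_one_of_re_mul_conj_eq_zero {p r : ℂ}
    (h₁ : (p * conj (1 - p)).re = 0) (h₂ : r.re = 1) (h₃ : (p * conj (r - p)).re = 0) :
    r = 1 ∨ p = 0 ∨ p = 1 := by
  simp only [mul_re, conj_re, conj_im, sub_re, sub_im, one_re, one_im] at h₁ h₃
  have hpr : p.im * r.im = 0 := by rw [h₂] at h₃; linear_combination h₃ - h₁
  rcases mul_eq_zero.mp hpr with hp | hr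
  · have : p.re * (1 - p.re) = 0 := by rw [hp] at h₁; linear_combination h₁
    rcases mul_eq_zero.mp this with h | h
    · exact Or.inr (Or.inl (ext h hp))
    · exact Or.inr (Or.inr (ext (by simp; linarith) hp))
  · exact Or.inl (ext (by simpa using h₂) hr)

end Complex

-- Indices are 0-based: `(i, j)` is the paper's position `(i + 1, j + 1)`.
def slackZeros : Set (Fin 7 × Fin 7) :=
  {(0,0),(0,1),(0,2),(1,0),(1,2),(1,3),(2,0),(2,3),(2,4),(2,5),
   (3,0),(3,1),(3,4),(3,6),(4,2),(4,3),(4,5),(5,1),(5,2),(5,5),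
   (5,6),(6,4),(6,5),(6,6)}

def HasSlackSupport {K : Type*} [Zero K] (A : Matrix (Fin 7) (Fin 7) K) : Prop :=
  ∀ i j, A i j = 0 ↔ (i, j) ∈ slackZeros

namespace HasSlackSupport

variable {K : Type*}

theorem apply_eq_zero [Zero K] {A : Matrix (Fin 7) (Fin 7) K} (hA : HasSlackSupport A)
    {i j : Fin 7} (h : (i, j) ∈ slackZeros) : A i j = 0 :=
  (hA i j).2 h

theorem apply_ne_zero [Zero K] {A : Matrix (Fin 7) (Fin 7) K} (hA : HasSlackSupport A)
    {i j : Fin 7} (h : (i, j) ∉ slackZeros) : A i j ≠ 0 :=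
  (hA i j).not.2 h

variable [CommRing K] [IsDomain K] {A : Matrix (Fin 7) (Fin 7) K}

theorem trinomial₁ (hA : HasSlackSupport A) (hrank : A.rank ≤ 4) :
    A 0 5 * A 1 4 * A 3 3 = A 0 4 * A 1 5 * A 3 3 + A 0 3 * A 1 4 * A 3 5 := by
  have hminor : (A.submatrix ![0, 1, 2, 3, 4] ![0, 1, 3, 4, 5]).det = A 4 0 * A 2 1 *
      (A 0 4 * A 1 5 * A 3 3 + A 0 3 * A 1 4 * A 3 5 - A 0 5 * A 1 4 * A 3 3) := by
    have hsub : A.submatrix ![0, 1, 2, 3, 4] ![0, 1, 3, 4, 5] =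
        !![0, 0, A 0 3, A 0 4, A 0 5;
           0, A 1 1, 0, A 1 4, A 1 5;
           0, A 2 1, 0, 0, 0;
           0, 0, A 3 3, 0, A 3 5;
           A 4 0, A 4 1, 0, A 4 4, 0] := by
      ext i j
      fin_cases i <;> fin_cases j <;> first | rfl | (refine hA.apply_eq_zero ?_; simp [slackZeros])
    rw [hsub]
    simp [det_succ_column_zero, Fin.sum_univ_succ, Fin.succAbove]
    ring
  have h := A.det_submatrix_eq_zero_of_rank_lt (by omega) ![0, 1, 2, 3, 4] ![0, 1, 3, 4, 5]
  rw [hminor, mul_eq_zero, sub_eq_zero] at h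
  have h40 : A 4 0 ≠ 0 := hA.apply_ne_zero (by simp [slackZeros])
  have h21 : A 2 1 ≠ 0 := hA.apply_ne_zero (by simp [slackZeros])
  exact (h.resolve_left (mul_ne_zero h40 h21)).symm

theorem trinomial₂ (hA : HasSlackSupport A) (hrank : A.rank ≤ 4) :
    A 0 4 * A 1 6 * A 2 1 = A 0 6 * A 1 4 * A 2 1 + A 0 4 * A 1 1 * A 2 6 := by
  have hminor : (A.submatrix ![0, 1, 2, 3, 4] ![0, 1, 3, 4, 6]).det = A 4 0 * A 3 3 *
      (A 0 4 * A 1 6 * A 2 1 - (A 0 6 * A 1 4 * A 2 1 + A 0 4 * A 1 1 * A 2 6)) := by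
    have hsub : A.submatrix ![0, 1, 2, 3, 4] ![0, 1, 3, 4, 6] =
        !![0, 0, A 0 3, A 0 4, A 0 6;
           0, A 1 1, 0, A 1 4, A 1 6;
           0, A 2 1, 0, 0, A 2 6;
           0, 0, A 3 3, 0, 0;
           A 4 0, A 4 1, 0, A 4 4, A 4 6] := by
      ext i j
      fin_cases i <;> fin_cases j <;> first | rfl | (refine hA.apply_eq_zero ?_; simp [slackZeros])
    rw [hsub]
    simp [det_succ_column_zero, Fin.sum_univ_succ, Fin.succAbove]
    ring
  have h := A.det_submatrix_eq_zero_of_rank_lt (by omega) ![0, 1, 2, 3, 4] ![0, 1, 3, 4, 6]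
  rw [hminor, mul_eq_zero, sub_eq_zero] at h
  have h40 : A 4 0 ≠ 0 := hA.apply_ne_zero (by simp [slackZeros])
  have h33 : A 3 3 ≠ 0 := hA.apply_ne_zero (by simp [slackZeros])
  exact h.resolve_left (mul_ne_zero h40 h33)

theorem trinomial₃ (hA : HasSlackSupport A) (hrank : A.rank ≤ 4) :
    A 0 5 * A 1 6 * A 4 0 * A 5 3 =
      A 0 6 * A 1 5 * A 4 0 * A 5 3 + A 0 3 * A 1 5 * A 4 6 * A 5 0 := by
  have hminor : (A.submatrix ![0, 1, 2, 4, 5] ![0, 2, 3, 5, 6]).det = A 2 2 *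
      (A 0 6 * A 1 5 * A 4 0 * A 5 3 + A 0 3 * A 1 5 * A 4 6 * A 5 0 -
        A 0 5 * A 1 6 * A 4 0 * A 5 3) := by
    have hsub : A.submatrix ![0, 1, 2, 4, 5] ![0, 2, 3, 5, 6] =
        !![0, 0, A 0 3, A 0 5, A 0 6;
           0, 0, 0, A 1 5, A 1 6;
           0, A 2 2, 0, 0, A 2 6;
           A 4 0, 0, 0, 0, A 4 6;
           A 5 0, 0, A 5 3, 0, 0] := by
      ext i j
      fin_cases i <;> fin_cases j <;> first | rfl | (refine hA.apply_eq_zero ?_; simp [slackZeros])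
    rw [hsub]
    simp [det_succ_column_zero, Fin.sum_univ_succ, Fin.succAbove]
    ring
  have h := A.det_submatrix_eq_zero_of_rank_lt (by omega) ![0, 1, 2, 4, 5] ![0, 2, 3, 5, 6]
  rw [hminor, mul_eq_zero, sub_eq_zero] at h
  have h22 : A 2 2 ≠ 0 := hA.apply_ne_zero (by simp [slackZeros])
  exact (h.resolve_left h22).symm

end HasSlackSupport

theorem hasSlackSupport_map_normSq_iff {M : Matrix (Fin 7) (Fin 7) ℂ} :
    HasSlackSupport (M.map normSq) ↔ HasSlackSupport M :=
  forall₂_congr fun i j => by rw [map_apply, normSq_eq_zero]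

theorem HasSlackSupport.re_mul_conj_eq_zero_of_rank_map_normSq_le
    {M : Matrix (Fin 7) (Fin 7) ℂ} (hM : HasSlackSupport M) (hrank : M.rank ≤ 4)
    (hSrank : (M.map normSq).rank ≤ 4) :
    (M 0 4 * M 1 5 * M 3 3 * conj (M 0 3 * M 1 4 * M 3 5)).re = 0 ∧
      (M 0 6 * M 1 4 * M 2 1 * conj (M 0 4 * M 1 1 * M 2 6)).re = 0 ∧
      (M 0 6 * M 1 5 * M 4 0 * M 5 3 * conj (M 0 3 * M 1 5 * M 4 6 * M 5 0)).re = 0 := by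
  have hS := hasSlackSupport_map_normSq_iff.2 hM
  refine ⟨re_mul_conj_eq_zero_of_normSq_add ?_, re_mul_conj_eq_zero_of_normSq_add ?_,
    re_mul_conj_eq_zero_of_normSq_add ?_⟩
  · rw [← hM.trinomial₁ hrank]
    simpa only [map_mul, map_apply] using hS.trinomial₁ hSrank
  · rw [← hM.trinomial₂ hrank]
    simpa only [map_mul, map_apply] using hS.trinomial₂ hSrank
  · rw [← hM.trinomial₃ hrank]
    simpa only [map_mul, map_apply] using hS.trinomial₃ hSrank

theorem HasSlackSupport.not_rank_map_normSq_le {M : Matrix (Fin 7) (Fin 7) ℂ}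
    (hM : HasSlackSupport M) (hrank : M.rank ≤ 4) : ¬ (M.map normSq).rank ≤ 4 := by
  intro hSrank
  obtain ⟨o₁, o₂, o₃⟩ := hM.re_mul_conj_eq_zero_of_rank_map_normSq_le hrank hSrank
  have E₁ := hM.trinomial₁ hrank
  have E₂ := hM.trinomial₂ hrank
  have E₃ := hM.trinomial₃ hrank
  obtain ⟨h03, h04, h05, h06, h11, h14, h15, h21, h26, h33, h35, h40, h53⟩ :
      M 0 3 ≠ 0 ∧ M 0 4 ≠ 0 ∧ M 0 5 ≠ 0 ∧ M 0 6 ≠ 0 ∧ M 1 1 ≠ 0 ∧ M 1 4 ≠ 0 ∧ M 1 5 ≠ 0 ∧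
        M 2 1 ≠ 0 ∧ M 2 6 ≠ 0 ∧ M 3 3 ≠ 0 ∧ M 3 5 ≠ 0 ∧ M 4 0 ≠ 0 ∧ M 5 3 ≠ 0 := by
    refine ⟨?_, ?_, ?_, ?_, ?_, ?_, ?_, ?_, ?_, ?_, ?_, ?_, ?_⟩ <;>
      exact hM.apply_ne_zero (by simp [slackZeros])
  set p := M 0 4 * M 1 5 / (M 0 5 * M 1 4) with hp
  set r := M 0 4 * M 1 6 / (M 0 6 * M 1 4) with hr
  have h₁ : (p * conj (1 - p)).re = 0 :=
    re_mul_conj_eq_zero_of_eq_mul (M 0 5 * M 1 4 * M 3 3)⁻¹ (by rw [hp]; field_simp)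
      (by rw [hp]; field_simp; linear_combination E₁) o₁
  have h₂ : r.re = 1 := by
    have := re_mul_conj_eq_zero_of_eq_mul (u' := 1) (v' := r - 1) (M 0 6 * M 1 4 * M 2 1)⁻¹
      (by field_simp) (by rw [hr]; field_simp; linear_combination E₂) o₂
    simpa [sub_eq_zero] using this
  have h₃ : (p * conj (r - p)).re = 0 :=
    re_mul_conj_eq_zero_of_eq_mul (M 0 4 / (M 0 5 * M 0 6 * M 1 4 * M 4 0 * M 5 3))
      (by rw [hp]; field_simp) (by rw [hp, hr]; field_simp; linear_combination E₃) o₃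
  obtain h | h | h := eq_one_or_eq_zero_or_eq_one_of_re_mul_conj_eq_zero h₁ h₂ h₃
  · rw [hr, div_eq_one_iff_eq (mul_ne_zero h06 h14)] at h
    have : M 0 4 * M 1 1 * M 2 6 = 0 := by linear_combination (M 2 1) * h - E₂
    exact mul_ne_zero (mul_ne_zero h04 h11) h26 this
  · rw [hp] at h
    exact div_ne_zero (mul_ne_zero h04 h15) (mul_ne_zero h05 h14) h
  · rw [hp, div_eq_one_iff_eq (mul_ne_zero h05 h14)] at h
    have : M 0 3 * M 1 4 * M 3 5 = 0 := by linear_combination -(M 3 3) * h - E₁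
    exact mul_ne_zero (mul_ne_zero h03 h14) h35 this

/-- The seven-vertex self-dual doubly 3/4 polytope of Figure 4 has no complex
psd-minimal realizations: no scaled slack matrix (the given support pattern, positive
entries elsewhere, rank 4) admits an entrywise complex Hadamard square root of rank 4. -/
theorem stmt_14 (S : Matrix (Fin 7) (Fin 7) ℝ)
    (hzero : ∀ i j : Fin 7,
      (i, j) ∈ ({(0,0),(0,1),(0,2),(1,0),(1,2),(1,3),(2,0),(2,3),(2,4),(2,5),
                 (3,0),(3,1),(3,4),(3,6),(4,2),(4,3),(4,5),(5,1),(5,2),(5,5),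
                 (5,6),(6,4),(6,5),(6,6)} : Set (Fin 7 × Fin 7)) → S i j = 0)
    (hpos : ∀ i j : Fin 7,
      (i, j) ∉ ({(0,0),(0,1),(0,2),(1,0),(1,2),(1,3),(2,0),(2,3),(2,4),(2,5),
                 (3,0),(3,1),(3,4),(3,6),(4,2),(4,3),(4,5),(5,1),(5,2),(5,5),
                 (5,6),(6,4),(6,5),(6,6)} : Set (Fin 7 × Fin 7)) → 0 < S i j)
    (hrank : S.rank = 4) :
    ¬ ∃ M : Matrix (Fin 7) (Fin 7) ℂ,
        M.rank = 4 ∧ ∀ i j : Fin 7, S i j = Complex.normSq (M i j) := by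
  rintro ⟨M, hMrank, hMS⟩
  have hSM : S = M.map normSq := Matrix.ext hMS
  have hS : HasSlackSupport S := fun i j =>
    ⟨fun h => by_contra fun hij => (hpos i j hij).ne' h, hzero i j⟩
  have hM : HasSlackSupport M := hasSlackSupport_map_normSq_iff.1 (hSM ▸ hS)
  exact hM.not_rank_map_normSq_le hMrank.le (hSM ▸ hrank.le)
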